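/- arXiv:1605.00038 — 2 statements merged into one kernel-verified Lean document; each statement's English description precedes it below -/
import Mathlib

section
/- Let A be a unital C*-algebra, x = x* ∈ A, and Z ∈ M_k(A) a matrix satisfying Z·Z* = Z*·Z = (1 - x²)·I_k and (x·I_k)·Z = -Z·(x·I_k) (anticommutation). Then P = (1/2)·I_{2k} + (1/2)·[[x·I_k, Z],[Z*, x·I_k]] is a projection in M_{2k}(A). -/
/-!
The block matrix `M = [[x I, Z], [Z*, x I]]` is a symmetry: it is self-adjoint, and `M² = 1`
because the diagonal blocks of `M²` are `x² I + Z Z* = Z* Z + x² I = I` while the off-diagonal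
ones vanish by the anticommutation of `x I` with `Z` (and, taking adjoints, with `Z*`).
For any self-adjoint `u` with `u² = 1`, `(1 + u) / 2` is a projection.
-/

open Matrix

theorem IsSelfAdjoint.isStarProjection_inv_two_smul_one_add {𝕜 R : Type*} [Field 𝕜]
    [StarRing 𝕜] [NeZero (2 : 𝕜)] [Ring R] [StarRing R] [Algebra 𝕜 R] [StarModule 𝕜 R]
    {u : R} (hu : IsSelfAdjoint u) (hu2 : u * u = 1) :
    IsStarProjection ((2 : 𝕜)⁻¹ • (1 + u)) where
  isIdempotentElem := by
    have h : (1 + u) * (1 + u) = (2 : 𝕜) • (1 + u) := by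
      rw [two_smul, mul_add, add_mul, add_mul, hu2]
      simp only [one_mul, mul_one]; abel
    rw [IsIdempotentElem, smul_mul_smul_comm, h, smul_smul, mul_assoc,
      inv_mul_cancel₀ two_ne_zero, mul_one]
  isSelfAdjoint := by
    rw [IsSelfAdjoint, star_smul, star_add, star_one, hu.star_eq, star_inv₀, star_ofNat]

theorem Matrix.IsHermitian.scalar {n α : Type*} [Fintype n] [DecidableEq n] [Semiring α]
    [StarRing α] {a : α} (ha : IsSelfAdjoint a) : (Matrix.scalar n a).IsHermitian :=
  isHermitian_diagonal_of_self_adjoint _ (by ext; exact ha)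

theorem Matrix.fromBlocks_mul_self_eq_one_of_anticommute {n α : Type*} [Fintype n]
    [DecidableEq n] [Ring α] [StarRing α]
    {X Z : Matrix n n α} (hX : X.IsHermitian) (hXZ : X * Z = -(Z * X))
    (h₁ : X * X + Z * Zᴴ = 1) (h₂ : Zᴴ * Z + X * X = 1) :
    fromBlocks X Z Zᴴ X * fromBlocks X Z Zᴴ X = 1 := by
  have hZX : Zᴴ * X = -(X * Zᴴ) := by
    simpa only [conjTranspose_mul, conjTranspose_neg, hX.eq] using congrArg conjTranspose hXZ
  rw [fromBlocks_multiply, h₁, h₂, hXZ, hZX, neg_add_cancel, neg_add_cancel, fromBlocks_one]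

/-- If `x = x*` and `Z ∈ M_k(A)` satisfies `ZZ* = Z*Z = (1-x²)I_k` and
`xI_k` anticommutes with `Z`, then `P = (1/2)I_{2k} + (1/2)[[xI_k, Z],[Z*, xI_k]]` is a
projection in `M_{2k}(A)`. -/
theorem distinguished_projection_anticommuting
    {A : Type*} [CStarAlgebra A] {k : ℕ} (x : A) (Z : Matrix (Fin k) (Fin k) A)
    (hx : star x = x)
    (hZ1 : Z * Zᴴ = Matrix.scalar (Fin k) (1 - x ^ 2))
    (hZ2 : Zᴴ * Z = Matrix.scalar (Fin k) (1 - x ^ 2))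
    (hanti : Matrix.scalar (Fin k) x * Z = -(Z * Matrix.scalar (Fin k) x)) :
    let P : Matrix (Fin k ⊕ Fin k) (Fin k ⊕ Fin k) A :=
      (2 : ℂ)⁻¹ • 1 +
        (2 : ℂ)⁻¹ • Matrix.fromBlocks (Matrix.scalar (Fin k) x) Z
          Zᴴ (Matrix.scalar (Fin k) x)
    Pᴴ = P ∧ P * P = P := by
  intro P
  set X := Matrix.scalar (Fin k) x
  have hX : X.IsHermitian := .scalar hx
  have hX2 : X * X + Matrix.scalar (Fin k) (1 - x ^ 2) = 1 := by
    rw [← map_mul, ← map_add, ← sq, add_sub_cancel, map_one]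
  have hM : (fromBlocks X Z Zᴴ X).IsHermitian := hX.fromBlocks rfl hX
  have hM2 := fromBlocks_mul_self_eq_one_of_anticommute hX hanti (hZ1 ▸ hX2)
    (by rw [hZ2, add_comm, hX2])
  have hP := IsSelfAdjoint.isStarProjection_inv_two_smul_one_add (𝕜 := ℂ) hM hM2
  rw [smul_add] at hP
  exact ⟨hP.isSelfAdjoint, hP.isIdempotentElem⟩
end

section
/- Let A be a unital C*-algebra, B : [-1,1] → A a continuous function whose values are self-adjoint unitaries. Define B̃ on the open set {x + iy ∈ ℂ : x² + y² ≤ 1, y ≠ ±1} by B̃(x+iy) = √(1-y²)·B(x/√(1-y²)) + (i·y)·1. Then B̃ extends to a continuous function on the closed unit disk with B̃(±i) = ±i·1, and every value of B̃ on the closed disk is unitary. -/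
/-!
The defining formula already makes sense at `±i`, where `√(1 - y²) = 0` and Lean's division
gives `x / 0 = 0`, so it serves as the extension itself. In the closed disk `|x| ≤ √(1 - y²)`,
so `B` is only ever evaluated on `[-1, 1]`, where it is bounded; near `±i` the first summand
is therefore a vanishing scalar times a bounded vector, which gives continuity there. Each
value is `s·b + iy·1` with `b` a self-adjoint involution and `s² + y² = 1`, and since `b`
commutes with `1` its product with its adjoint `s·b - iy·1` is `s²b² + y² = 1`.
-/

open Complex Filter Metric Set Topology

theorem div_sqrt_one_sub_sq_mem_Icc {x y : ℝ} (h : x ^ 2 + y ^ 2 ≤ 1) :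
    x / √(1 - y ^ 2) ∈ Icc (-1 : ℝ) 1 := by
  have hx : |x| ≤ √(1 - y ^ 2) := Real.abs_le_sqrt (by linarith)
  rw [mem_Icc, ← abs_le, abs_div, abs_of_nonneg (Real.sqrt_nonneg _)]
  exact div_le_one_of_le₀ hx (Real.sqrt_nonneg _)

theorem Complex.re_sq_add_im_sq_le_one {z : ℂ} (hz : z ∈ closedBall (0 : ℂ) 1) :
    z.re ^ 2 + z.im ^ 2 ≤ 1 := by
  have : ‖z‖ ^ 2 ≤ 1 := pow_le_one₀ (norm_nonneg z) (mem_closedBall_zero_iff.mp hz)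
  rwa [Complex.sq_norm, Complex.normSq_apply, ← sq, ← sq] at this

theorem mapsTo_re_div_sqrt_closedBall :
    MapsTo (fun z : ℂ => z.re / √(1 - z.im ^ 2)) (closedBall 0 1) (Icc (-1) 1) :=
  fun _ hz => div_sqrt_one_sub_sq_mem_Icc (re_sq_add_im_sq_le_one hz)

theorem continuousOn_sqrt_smul_comp_re_div_sqrt {E : Type*} [NormedAddCommGroup E]
    [NormedSpace ℂ E] {B : ℝ → E} (hB : ContinuousOn B (Icc (-1) 1)) :
    ContinuousOn (fun z : ℂ => (√(1 - z.im ^ 2) : ℂ) • B (z.re / √(1 - z.im ^ 2)))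
      (closedBall 0 1) := by
  intro z hz
  have hsqrt : Continuous fun w : ℂ => (√(1 - w.im ^ 2) : ℂ) := by fun_prop
  by_cases h0 : √(1 - z.im ^ 2) = 0
  · obtain ⟨M, hM⟩ := isCompact_Icc.exists_bound_of_continuousOn hB
    have hbdd : IsBoundedUnder (· ≤ ·) (𝓝[closedBall 0 1] z)
        (norm ∘ fun w : ℂ => B (w.re / √(1 - w.im ^ 2))) :=
      isBoundedUnder_of_eventually_le (a := M) <| eventually_nhdsWithin_of_forall
        fun w hw => hM _ (mapsTo_re_div_sqrt_closedBall hw)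
    have hvanish :
        Tendsto (fun w : ℂ => (√(1 - w.im ^ 2) : ℂ)) (𝓝[closedBall 0 1] z) (𝓝 0) := by
      simpa [h0] using (hsqrt.tendsto z).mono_left nhdsWithin_le_nhds
    simpa [ContinuousWithinAt, h0] using hvanish.zero_smul_isBoundedUnder_le hbdd
  · have harg : ContinuousAt (fun w : ℂ => w.re / √(1 - w.im ^ 2)) z :=
      ContinuousAt.div (by fun_prop) (by fun_prop) h0
    exact hsqrt.continuousWithinAt.smul <|
      (hB _ (mapsTo_re_div_sqrt_closedBall hz)).comp (f := fun w : ℂ => w.re / √(1 - w.im ^ 2))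
        harg.continuousWithinAt mapsTo_re_div_sqrt_closedBall

theorem ofReal_smul_add_ofReal_mul_I_smul_one_mem_unitary {A : Type*} [Ring A] [StarRing A]
    [Algebra ℂ A] [StarModule ℂ A] {b : A} (hb : IsSelfAdjoint b) (hb2 : b ^ 2 = 1)
    {s y : ℝ} (h : s ^ 2 + y ^ 2 = 1) :
    (s : ℂ) • b + ((y : ℂ) * I) • (1 : A) ∈ unitary A := by
  have hstar :
      star ((s : ℂ) • b + ((y : ℂ) * I) • (1 : A)) = (s : ℂ) • b - ((y : ℂ) * I) • 1 := by
    simp [star_smul, hb.star_eq, sub_eq_add_neg]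
  have hsy : (s : ℂ) * s - ((y : ℂ) * I) * ((y : ℂ) * I) = 1 := by
    have hc : (s : ℂ) ^ 2 + (y : ℂ) ^ 2 = 1 := by exact_mod_cast h
    linear_combination hc - (y : ℂ) ^ 2 * I_sq
  rw [Unitary.mem_iff, hstar]
  constructor <;>
  · simp only [mul_add, add_mul, mul_sub, sub_mul, smul_mul_smul_comm, mul_one, one_mul,
      ← sq b, hb2]
    linear_combination (norm := module) hsy • (1 : A)

noncomputable def diskExtension {A : Type*} [Ring A] [Algebra ℂ A] (B : ℝ → A) (z : ℂ) : A :=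
  (√(1 - z.im ^ 2) : ℂ) • B (z.re / √(1 - z.im ^ 2)) + ((z.im : ℂ) * I) • 1

/-- A continuous path `B` of self-adjoint unitaries over `[-1,1]` gives rise
to a continuous unitary-valued function `B̃` on the closed unit disk, defined by
`B̃(x+iy) = √(1-y²)·B(x/√(1-y²)) + iy·1` away from `±i`, with `B̃(±i) = ±i·1`. -/
theorem disk_extension_of_selfadjoint_unitary_path
    {A : Type*} [CStarAlgebra A] (B : ℝ → A) (hB : Continuous B)
    (hBsa : ∀ t ∈ Set.Icc (-1 : ℝ) 1, star (B t) = B t)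
    (hBu : ∀ t ∈ Set.Icc (-1 : ℝ) 1, (B t) ^ 2 = 1) :
    ∃ F : ℂ → A,
      ContinuousOn F (Metric.closedBall (0 : ℂ) 1) ∧
      (∀ z ∈ Metric.closedBall (0 : ℂ) 1, z.im ^ 2 ≠ 1 →
        F z = (Real.sqrt (1 - z.im ^ 2) : ℂ) • B (z.re / Real.sqrt (1 - z.im ^ 2)) +
          ((z.im : ℂ) * Complex.I) • (1 : A)) ∧
      F Complex.I = Complex.I • (1 : A) ∧
      F (-Complex.I) = -(Complex.I • (1 : A)) ∧
      (∀ z ∈ Metric.closedBall (0 : ℂ) 1,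
        F z * star (F z) = 1 ∧ star (F z) * F z = 1) := by
  refine ⟨diskExtension B, ?_, fun z _ _ => rfl, by simp [diskExtension],
    by simp [diskExtension], fun z hz => ?_⟩
  · exact (continuousOn_sqrt_smul_comp_re_div_sqrt hB.continuousOn).add (by fun_prop)
  · have ht := mapsTo_re_div_sqrt_closedBall hz
    have hsy : √(1 - z.im ^ 2) ^ 2 + z.im ^ 2 = 1 := by
      rw [Real.sq_sqrt (by linarith [re_sq_add_im_sq_le_one hz, sq_nonneg z.re])]
      ring
    exact (Unitary.mem_iff.mp
      (ofReal_smul_add_ofReal_mul_I_smul_one_mem_unitary (hBsa _ ht) (hBu _ ht) hsy)).symm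
end
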